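/- Let Λ be an Auslander regular ring and M a finitely generated Λ-module with pd_Λ(M) ≤ 1. If N ⊆ M is a submodule with Ext^0_Λ(N, Λ) = Ext^1_Λ(N, Λ) = 0, i.e. N is pseudo-null, then N = 0; that is, M has no nontrivial pseudo-null submodule. -/

import Mathlib

open CategoryTheory

/-- `ExtGrp Λ i M` is the underlying `Λ`-module of `Ext^i_Λ(M, Λ)`. -/
abbrev ExtGrp (Λ : Type) [CommRing Λ] (i : ℕ) (M : Type) [AddCommGroup M]
    [Module Λ M] : Type :=
  (((Ext Λ (ModuleCat Λ) i).obj (Opposite.op (ModuleCat.of Λ M))).obj (ModuleCat.of Λ Λ))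

section Aux

variable {Λ : Type} [CommRing Λ]

lemma aux_subsingleton_of_iso {A B : ModuleCat Λ} (e : A ≅ B) [h : Subsingleton A] :
    Subsingleton B := by
  constructor
  intro x y
  have : ∀ z : B, e.hom (e.inv z) = z := fun z => by
    have := e.inv_hom_id
    calc e.hom (e.inv z) = (e.inv ≫ e.hom) z := rfl
    _ = z := by rw [this]; rfl
  rw [← this x, ← this y, Subsingleton.elim (e.inv x) (e.inv y)]

/-- Factoring a linear map through a surjection whose kernel it kills. -/
lemma aux_factor {A Nm T : Type} [AddCommGroup A] [Module Λ A] [AddCommGroup Nm] [Module Λ Nm]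
    [AddCommGroup T] [Module Λ T]
    (p : A →ₗ[Λ] Nm) (hp : Function.Surjective p) (F : A →ₗ[Λ] T)
    (hF : LinearMap.ker p ≤ LinearMap.ker F) :
    ∃ f : Nm →ₗ[Λ] T, ∀ z, f (p z) = F z := by
  refine ⟨(Submodule.liftQ _ F hF).comp (p.quotKerEquivOfSurjective hp).symm.toLinearMap,
    fun z => ?_⟩
  have h1 : (p.quotKerEquivOfSurjective hp) (Submodule.Quotient.mk z) = p z := by
    simp [LinearMap.quotKerEquivOfSurjective, LinearMap.quotKerEquivRange_apply_mk]
  have h2 : (p.quotKerEquivOfSurjective hp).symm (p z) = Submodule.Quotient.mk z := by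
    apply (p.quotKerEquivOfSurjective hp).injective
    simp [h1]
  simp only [LinearMap.comp_apply, LinearEquiv.coe_toLinearMap, h2]
  exact Submodule.liftQ_apply _ F z

/-- If `Ext^0(N, Λ)` vanishes then every linear map `N →ₗ Λ` is zero. -/
lemma aux_hom_vanish (Nm : Type) [AddCommGroup Nm] [Module Λ Nm]
    (h0 : Subsingleton (ExtGrp Λ 0 Nm)) (f : Nm →ₗ[Λ] Λ) : f = 0 := by
  classical
  let Q : ProjectiveResolution (ModuleCat.of Λ Nm) := ProjectiveResolution.of _
  let C := Q.complex.linearYonedaObj Λ (ModuleCat.of Λ Λ)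
  have hsub : Subsingleton (C.homology 0) :=
    @aux_subsingleton_of_iso Λ _ _ _ (Q.isoExt 0 (ModuleCat.of Λ Λ)) h0
  have hzero : Limits.IsZero (C.homology 0) := ModuleCat.isZero_of_subsingleton _
  have hex : C.ExactAt 0 := (C.exactAt_iff_isZero_homology 0).mpr hzero
  rw [C.exactAt_iff' 0 0 1 (CochainComplex.prev_nat_zero) (by simp)] at hex
  rw [ShortComplex.moduleCat_exact_iff] at hex
  -- the augmentation
  let ι := HomologicalComplex.singleObjXSelf (ComplexShape.down ℕ) 0 (ModuleCat.of Λ Nm)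
  let ε : Q.complex.X 0 ⟶ ModuleCat.of Λ Nm := Q.π.f 0 ≫ ι.hom
  have hε : Function.Surjective ε := by
    rw [← ModuleCat.epi_iff_surjective]
    infer_instance
  -- the cocycle
  let x : (C.X 0 : Type) := ε ≫ ModuleCat.ofHom f
  have hx : (C.d 0 1) x = 0 := by
    show Q.complex.d 1 0 ≫ (ε ≫ ModuleCat.ofHom f) = 0
    show Q.complex.d 1 0 ≫ ((Q.π.f 0 ≫ ι.hom) ≫ ModuleCat.ofHom f) = 0
    rw [← Category.assoc, ← Category.assoc, Q.complex_d_comp_π_f_zero]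
    rw [Category.assoc]; exact Limits.zero_comp
  obtain ⟨y, hy⟩ := hex x hx
  have hd00 : C.d 0 0 = 0 := C.shape 0 0 (by simp)
  have hx0 : x = 0 := by
    rw [← hy]
    show C.d 0 0 y = 0
    rw [hd00]
    rfl
  ext v
  obtain ⟨q, hq⟩ := hε v
  have : f (ε q) = 0 := by
    have := congrArg (fun (g : Q.complex.X 0 ⟶ ModuleCat.of Λ Λ) => g q) hx0
    exact this
  rw [hq] at this
  simpa using this

/-- If `Ext^1(N, Λ)` vanishes, then for any surjection `p : A ↠ N` and injection
`ψ : B ↪ A` with range `ker p`, every functional on `B` extends to `A`. -/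
lemma aux_extend {Nm A B : Type} [AddCommGroup Nm] [Module Λ Nm]
    [AddCommGroup A] [Module Λ A] [AddCommGroup B] [Module Λ B]
    (h1 : Subsingleton (ExtGrp Λ 1 Nm))
    (p : A →ₗ[Λ] Nm) (hp : Function.Surjective p)
    (ψ : B →ₗ[Λ] A) (hψ : Function.Injective ψ)
    (hker : LinearMap.ker p = LinearMap.range ψ)
    (g : B →ₗ[Λ] Λ) : ∃ G : A →ₗ[Λ] Λ, G ∘ₗ ψ = g := by
  classical
  let Q : ProjectiveResolution (ModuleCat.of Λ Nm) := ProjectiveResolution.of _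
  let C := Q.complex.linearYonedaObj Λ (ModuleCat.of Λ Λ)
  have hsub : Subsingleton (C.homology 1) :=
    @aux_subsingleton_of_iso Λ _ _ _ (Q.isoExt 1 (ModuleCat.of Λ Λ)) h1
  have hzero : Limits.IsZero (C.homology 1) := ModuleCat.isZero_of_subsingleton _
  have hex : C.ExactAt 1 := (C.exactAt_iff_isZero_homology 1).mpr hzero
  rw [C.exactAt_iff' 0 1 2 (by simp) (by simp)] at hex
  rw [ShortComplex.moduleCat_exact_iff] at hex
  -- the augmentation
  let ι := HomologicalComplex.singleObjXSelf (ComplexShape.down ℕ) 0 (ModuleCat.of Λ Nm)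
  let ε : Q.complex.X 0 ⟶ ModuleCat.of Λ Nm := Q.π.f 0 ≫ ι.hom
  have hε : Function.Surjective ε := by
    rw [← ModuleCat.epi_iff_surjective]
    infer_instance
  have hιinj : Function.Injective ι.hom := by
    rw [← ModuleCat.mono_iff_injective]
    infer_instance
  have hdε : Q.complex.d 1 0 ≫ ε = 0 := by
    show Q.complex.d 1 0 ≫ (Q.π.f 0 ≫ ι.hom) = 0
    rw [← Category.assoc, Q.complex_d_comp_π_f_zero]
    exact Limits.zero_comp
  -- exactness of the resolution at degree 0
  have hres : ∀ q : Q.complex.X 0, ε q = 0 → ∃ w, Q.complex.d 1 0 w = q := by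
    intro q hq
    have hq' : Q.π.f 0 q = 0 := by
      apply hιinj
      rw [map_zero]; exact hq
    have := Q.exact₀
    rw [ShortComplex.moduleCat_exact_iff] at this
    exact this q hq'
  -- lift the augmentation through p
  let pA : ModuleCat.of Λ A ⟶ ModuleCat.of Λ Nm := ModuleCat.ofHom p
  have : Epi pA := (ModuleCat.epi_iff_surjective pA).mpr hp
  let α : Q.complex.X 0 ⟶ ModuleCat.of Λ A := Projective.factorThru ε pA
  have hα : α ≫ pA = ε := Projective.factorThru_comp ε pA
  have hαp : ∀ q, p (α q) = ε q := fun q => congrArg (fun h => h q) hα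
  -- δ lands in ker p = range ψ
  let δ : Q.complex.X 1 ⟶ ModuleCat.of Λ A := Q.complex.d 1 0 ≫ α
  have hδmem : ∀ w, δ w ∈ LinearMap.range ψ := by
    intro w
    rw [← hker]
    show p (α (Q.complex.d 1 0 w)) = 0
    rw [hαp]
    have := congrArg (fun h => h w) hdε
    simpa using this
  let eψ : B ≃ₗ[Λ] LinearMap.range ψ := LinearEquiv.ofInjective ψ hψ
  let δ' : (Q.complex.X 1 : Type) →ₗ[Λ] LinearMap.range ψ :=
    LinearMap.codRestrict (LinearMap.range ψ) (show (Q.complex.X 1 : Type) →ₗ[Λ] A from δ.hom) hδmem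
  let γ : (Q.complex.X 1 : Type) →ₗ[Λ] B := eψ.symm.toLinearMap ∘ₗ δ'
  have hψsymm : ∀ z : LinearMap.range ψ, ψ (eψ.symm z) = (z : A) := by
    intro z
    have h1' := congrArg Subtype.val (eψ.apply_symm_apply z)
    rw [show ((eψ (eψ.symm z)) : A) = ψ (eψ.symm z) from rfl] at h1'
    exact h1'
  have hγ : ∀ w, ψ (γ w) = δ w := by
    intro w
    show ψ (eψ.symm (δ' w)) = δ w
    rw [hψsymm (δ' w)]
    rfl
  -- the cocycle
  let c : (C.X 1 : Type) := ModuleCat.ofHom (g ∘ₗ γ)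
  have hc : C.d 1 2 c = 0 := by
    show Q.complex.d 2 1 ≫ ModuleCat.ofHom (g ∘ₗ γ) = 0
    ext w
    show g (γ (Q.complex.d 2 1 w)) = 0
    have : ψ (γ (Q.complex.d 2 1 w)) = ψ 0 := by
      rw [hγ, map_zero]
      show α (Q.complex.d 1 0 (Q.complex.d 2 1 w)) = 0
      have := congrArg (fun h => h w) (Q.complex.d_comp_d 2 1 0)
      simp only [HomologicalComplex.d_comp_d] at this ⊢
      have h0 : Q.complex.d 1 0 (Q.complex.d 2 1 w) = 0 := by
        have := Q.complex.d_comp_d 2 1 0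
        calc Q.complex.d 1 0 (Q.complex.d 2 1 w) = (Q.complex.d 2 1 ≫ Q.complex.d 1 0) w := rfl
        _ = 0 := by rw [this]; rfl
      rw [h0, map_zero]
    have := hψ this
    rw [this, map_zero]
  obtain ⟨h, hh⟩ := hex c hc
  -- h : C.X 0, with h ∘ d₁₀ = c
  let h' : Q.complex.X 0 ⟶ ModuleCat.of Λ Λ := h
  have hh2 : C.d 0 1 h' = c := hh
  have hhp : ∀ w, h' (Q.complex.d 1 0 w) = g (γ w) := by
    intro w
    have := congrArg (fun (u : Q.complex.X 1 ⟶ ModuleCat.of Λ Λ) => u w) hh2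
    exact this
  -- now build the extension
  let α' : (Q.complex.X 0 : Type) →ₗ[Λ] A := α.hom
  let Θ : ((Q.complex.X 0 : Type) × B) →ₗ[Λ] A := LinearMap.coprod α' ψ
  have hΘ : Function.Surjective Θ := by
    intro a
    obtain ⟨q, hq⟩ := hε (p a)
    have : a - α' q ∈ LinearMap.range ψ := by
      rw [← hker]
      show p (a - α' q) = 0
      rw [map_sub, show p (α' q) = ε q from hαp q, hq, sub_self]
    obtain ⟨b, hb⟩ := this
    exact ⟨(q, b), by simp [Θ, LinearMap.coprod_apply, hb]⟩
  let F : ((Q.complex.X 0 : Type) × B) →ₗ[Λ] Λ :=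
    LinearMap.coprod (show (Q.complex.X 0 : Type) →ₗ[Λ] Λ from h'.hom) g
  have hkerΘ : LinearMap.ker Θ ≤ LinearMap.ker F := by
    rintro ⟨q, b⟩ hqb
    have hqb' : α' q + ψ b = 0 := hqb
    have hq0 : ε q = 0 := by
      have h1' : p (α' q + ψ b) = 0 := by rw [hqb', map_zero]
      have h2' : p (ψ b) = 0 := by
        have : ψ b ∈ LinearMap.ker p := by rw [hker]; exact ⟨b, rfl⟩
        exact this
      rw [map_add, h2', add_zero] at h1'
      rw [← hαp]; exact h1'
    obtain ⟨w, hw⟩ := hres q hq0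
    have hbw : b = -γ w := by
      apply hψ
      rw [map_neg, hγ]
      show ψ b = -(α' (Q.complex.d 1 0 w))
      rw [hw]
      exact eq_neg_of_add_eq_zero_left (by rwa [add_comm] at hqb')
    show F (q, b) = 0
    have e1 : F (q, b) = (show Λ from h' q) + g b := rfl
    have e2 : h' q = g (γ w) := by
      rw [← hw]; exact hhp w
    rw [e1, hbw, map_neg, e2, add_neg_cancel]
  obtain ⟨G, hG⟩ := aux_factor Θ hΘ F hkerΘ
  refine ⟨G, ?_⟩
  ext b
  have hθb : Θ (0, b) = ψ b := by simp [Θ]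
  have hFb : F (0, b) = g b := by
    have : F (0, b) = (show Λ from h' 0) + g b := rfl
    rw [this, map_zero, zero_add]
  calc G (ψ b) = G (Θ (0, b)) := by rw [hθb]
  _ = F (0, b) := hG _
  _ = g b := hFb

end Aux

/-- Over an Auslander regular ring `Λ` (i.e. a Noetherian ring satisfying the Auslander
condition: for every finitely generated module `M'`, every `i`, and every submodule
`N'` of `Ext^i_Λ(M', Λ)`, the grade of `N'` is at least `i`), a finitely generated module
`M` of projective dimension at most `1` has no nontrivial pseudo-null submodule: every
submodule `N ⊆ M` with `Ext^0_Λ(N, Λ) = Ext^1_Λ(N, Λ) = 0` is zero. -/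
theorem stmt14 (Λ : Type) [CommRing Λ] [IsNoetherianRing Λ]
    -- the Auslander condition:
    (hAus : ∀ (M' : Type) (_ : AddCommGroup M') (_ : Module Λ M'),
      Module.Finite Λ M' → ∀ (i : ℕ) (N' : Submodule Λ (ExtGrp Λ i M')),
        ∀ k < i, Subsingleton (ExtGrp Λ k N'))
    (M : Type) [AddCommGroup M] [Module Λ M] [Module.Finite Λ M]
    -- `M` has projective dimension at most 1:
    (P₀ P₁ : Type) (_ : AddCommGroup P₀) (_ : AddCommGroup P₁)
    (_ : Module Λ P₀) (_ : Module Λ P₁)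
    (hP₀fin : Module.Finite Λ P₀) (hP₁fin : Module.Finite Λ P₁)
    (hP₀ : Module.Projective Λ P₀) (hP₁ : Module.Projective Λ P₁)
    (d : P₁ →ₗ[Λ] P₀) (π : P₀ →ₗ[Λ] M)
    (hd : Function.Injective d) (hπ : Function.Surjective π)
    (hdπ : LinearMap.range d = LinearMap.ker π)
    -- a pseudo-null submodule of `M`:
    (N : Submodule Λ M)
    (h0 : Subsingleton (ExtGrp Λ 0 N)) (h1 : Subsingleton (ExtGrp Λ 1 N)) :
    N = ⊥ := by
  classical
  -- the preimage `A = π⁻¹(N)` and the surjection `p : A ↠ N`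
  set A := Submodule.comap π N with hA
  have hmem : ∀ x ∈ A, π x ∈ N := by
    intro x hx
    exact Submodule.mem_comap.mp hx
  let p : A →ₗ[Λ] N := π.restrict hmem
  have hp : Function.Surjective p := by
    rintro ⟨v, hv⟩
    obtain ⟨x, hx⟩ := hπ v
    have hxA : x ∈ A := by show π x ∈ N; rw [hx]; exact hv
    exact ⟨⟨x, hxA⟩, Subtype.ext (by simpa [p, LinearMap.restrict_apply] using hx)⟩
  -- `ψ : P₁ → A` with image `ker p`
  have hdA : ∀ y : P₁, d y ∈ A := by
    intro y
    show π (d y) ∈ N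
    have : d y ∈ LinearMap.ker π := by rw [← hdπ]; exact ⟨y, rfl⟩
    rw [this]
    exact N.zero_mem
  let ψ : P₁ →ₗ[Λ] A := d.codRestrict A hdA
  have hψ : Function.Injective ψ := by
    intro y₁ y₂ hy
    apply hd
    exact congrArg Subtype.val hy
  have hker : LinearMap.ker p = LinearMap.range ψ := by
    ext ⟨x, hx⟩
    constructor
    · intro hk
      have hk' : π x = 0 := by
        have : p ⟨x, hx⟩ = 0 := hk
        exact congrArg Subtype.val this
      have : x ∈ LinearMap.range d := by rw [hdπ]; exact hk'
      obtain ⟨y, hy⟩ := this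
      exact ⟨y, Subtype.ext hy⟩
    · rintro ⟨y, hy⟩
      have hx' : x = d y := (congrArg Subtype.val hy).symm
      show p ⟨x, hx⟩ = 0
      apply Subtype.ext
      show π x = 0
      rw [hx']
      have : d y ∈ LinearMap.ker π := by rw [← hdπ]; exact ⟨y, rfl⟩
      exact this
  -- a retraction `r : A → P₁` of `ψ`, using vanishing of `Ext¹(N, Λ)`
  obtain ⟨n, t, ht⟩ := Module.Finite.exists_fin' Λ P₁
  obtain ⟨i, hi⟩ := Module.projective_lifting_property t LinearMap.id
    (LinearMap.range_eq_top.mp (LinearMap.range_eq_top.mpr ht))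
  have hEij : ∀ j : Fin n, ∃ G : A →ₗ[Λ] Λ, G ∘ₗ ψ = (LinearMap.proj j) ∘ₗ i :=
    fun j => aux_extend h1 p hp ψ hψ hker ((LinearMap.proj j) ∘ₗ i)
  choose G hG using hEij
  let Gpi : A →ₗ[Λ] (Fin n → Λ) := LinearMap.pi G
  let r : A →ₗ[Λ] P₁ := t ∘ₗ Gpi
  have hr : ∀ y : P₁, r (ψ y) = y := by
    intro y
    have h1' : Gpi (ψ y) = i y := by
      funext j
      have := congrArg (fun (u : P₁ →ₗ[Λ] Λ) => u y) (hG j)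
      simpa [Gpi, LinearMap.pi_apply] using this
    show t (Gpi (ψ y)) = y
    rw [h1']
    have := congrArg (fun (u : P₁ →ₗ[Λ] P₁) => u y) hi
    simpa using this
  -- an embedding of `P₀` into a finite free module
  obtain ⟨m, t₀, ht₀⟩ := Module.Finite.exists_fin' Λ P₀
  obtain ⟨i₀, hi₀⟩ := Module.projective_lifting_property t₀ LinearMap.id
    (LinearMap.range_eq_top.mp (LinearMap.range_eq_top.mpr ht₀))
  have hi₀inj : Function.Injective i₀ := by
    intro a b hab
    have ha := congrArg (fun (u : P₀ →ₗ[Λ] P₀) => u a) hi₀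
    have hb := congrArg (fun (u : P₀ →ₗ[Λ] P₀) => u b) hi₀
    simp only [LinearMap.comp_apply, LinearMap.id_apply] at ha hb
    rw [← ha, ← hb, hab]
  -- now show `N = ⊥`
  rw [eq_bot_iff]
  intro v hv
  by_contra hv0
  have hv0' : (⟨v, hv⟩ : N) ≠ 0 := fun h => hv0 (by simpa using congrArg Subtype.val h)
  obtain ⟨a, ha⟩ := hp ⟨v, hv⟩
  -- `y₀ := a - ψ (r a)` is a nonzero element in the kernel of `r`
  let y₀ : A := a - ψ (r a)
  have hpψ : ∀ y : P₁, p (ψ y) = 0 := by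
    intro y
    have : ψ y ∈ LinearMap.ker p := by rw [hker]; exact ⟨y, rfl⟩
    exact this
  have hpy₀ : p y₀ = (⟨v, hv⟩ : N) := by
    show p (a - ψ (r a)) = _
    rw [map_sub, hpψ, sub_zero, ha]
  have hy₀ne : (y₀ : P₀) ≠ 0 := by
    intro h
    have : y₀ = 0 := Subtype.ext h
    rw [this, map_zero] at hpy₀
    exact hv0' hpy₀.symm
  have hi₀y₀ : i₀ (y₀ : P₀) ≠ 0 := fun h => hy₀ne (hi₀inj (by simpa using h))
  obtain ⟨j, hj⟩ : ∃ j, i₀ (y₀ : P₀) j ≠ 0 := by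
    by_contra hall
    push_neg at hall
    exact hi₀y₀ (funext hall)
  -- the functional `F` on `A` killing `ker p`
  let ℓ : A →ₗ[Λ] Λ := (LinearMap.proj j) ∘ₗ i₀ ∘ₗ A.subtype
  let σ : A →ₗ[Λ] A := LinearMap.id - ψ ∘ₗ r
  let F : A →ₗ[Λ] Λ := ℓ ∘ₗ σ
  have hσ : ∀ z : A, σ z = z - ψ (r z) := fun z => rfl
  have hFker : LinearMap.ker p ≤ LinearMap.ker F := by
    intro z hz
    rw [hker] at hz
    obtain ⟨y, hy⟩ := hz
    show F z = 0
    have hz0 : σ z = 0 := by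
      rw [hσ, ← hy, hr, sub_self]
    show ℓ (σ z) = 0
    rw [hz0, map_zero]
  obtain ⟨f, hf⟩ := aux_factor p hp F hFker
  have hfz : f = 0 := aux_hom_vanish N h0 f
  -- contradiction: `F y₀ ≠ 0` but `F y₀ = f (p y₀) = 0`
  have hFy₀ : F y₀ = 0 := by rw [← hf y₀, hfz]; rfl
  have hry₀ : r y₀ = 0 := by
    show r (a - ψ (r a)) = 0
    rw [map_sub, hr, sub_self]
  have hFy2 : F y₀ = i₀ (y₀ : P₀) j := by
    have hσy : σ y₀ = y₀ := by rw [hσ, hry₀, map_zero, sub_zero]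
    calc F y₀ = ℓ (σ y₀) := rfl
    _ = ℓ y₀ := by rw [hσy]
    _ = i₀ (y₀ : P₀) j := rfl
  rw [hFy₀] at hFy2
  exact hj hFy2.symm
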